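/- If G ≅ C_p^δ is an elementary abelian p-group of rank δ, then C(G) ≤ (5/3)·√|G|, with equality if and only if G ≅ C_2 × C_2. Moreover, C(C_p^δ) = Σ_{0≤i≤δ−1} p^δ/(p^δ − p^i). -/

import Mathlib

/-!
Definitions supporting the formalization of
"An upper bound on the Chebotarev invariant of a finite group" (Lucchini–Tracey).
-/

open scoped BigOperators

namespace ChebotarevPaper

/-- A `k`-tuple of elements of `G` invariably generates `G` if, replacing each entry by an
arbitrary conjugate, the resulting elements always generate `G`. -/
def InvGen (G : Type*) [Group G] {k : ℕ} (f : Fin k → G) : Prop :=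
  ∀ c : Fin k → G, Subgroup.closure (Set.range fun i => c i * f i * (c i)⁻¹) = ⊤

/-- The probability that `k` independent uniformly random elements of `G` invariably
generate `G`. -/
noncomputable def probInvGen (G : Type*) [Group G] (k : ℕ) : ℝ :=
  Nat.card {f : Fin k → G // InvGen G f} / (Nat.card G : ℝ) ^ k

/-- The Chebotarev invariant `C(G)`:  `C(G) = Σ_{k ≥ 0} (1 − P_I(G,k))`, where `P_I(G,k)`
is the probability that `k` independent uniformly random elements of `G` invariably
generate `G`. -/
noncomputable def cheb (G : Type*) [Group G] : ℝ :=
  ∑' k : ℕ, (1 - probInvGen G k)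

/-- The probability that `k` independent uniformly random elements of `G` generate `G`. -/
noncomputable def probGen (G : Type*) [Group G] (k : ℕ) : ℝ :=
  Nat.card {f : Fin k → G // Subgroup.closure (Set.range f) = ⊤} / (Nat.card G : ℝ) ^ k

/-- The expected number of uniformly random elements of `G` needed to generate `G`. -/
noncomputable def expectedGen (G : Type*) [Group G] : ℝ :=
  ∑' k : ℕ, (1 - probGen G k)

/-- `d(G)`: the minimal number of generators of `G`. -/
noncomputable def minGen (G : Type*) [Group G] : ℕ :=
  sInf {n | ∃ f : Fin n → G, Subgroup.closure (Set.range f) = ⊤}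

/-- `σ` has the defining property of the constant `σ = 2.118456563…` of Pomerance:
for every finite group `X`, the expected number of uniformly random elements needed to
generate `X` is at most `d(X) + σ`. -/
def IsPomeranceConst (σ : ℝ) : Prop :=
  ∀ (X : Type) [Group X] [Finite X], expectedGen X ≤ minGen X + σ

variable (G : Type*) [Group G]

/-- `(X, Y)` is a chief factor of `G`:  both are normal in `G`, `Y < X`, and no normal
subgroup of `G` lies strictly between them (i.e. `X/Y` is a minimal normal subgroup of
`G/Y`). -/
def IsChiefFactorPair (X Y : Subgroup G) : Prop :=
  X.Normal ∧ Y.Normal ∧ Y < X ∧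
    ∀ N : Subgroup G, N.Normal → Y ≤ N → N ≤ X → N = Y ∨ N = X

/-- The chief factor `X/Y` is complemented: there is `U ≤ G` with `UX = G` and
`U ⊓ X = Y`. -/
def IsComplementedFactor (X Y : Subgroup G) : Prop :=
  ∃ U : Subgroup G, U ⊔ X = ⊤ ∧ U ⊓ X = Y

/-- The chief factor `X/Y` is a Frattini chief factor, i.e. `X/Y ≤ Frat(G/Y)`;
equivalently (and this is how we state it), `X/Y` is abelian and has no complement
in `G`. -/
def IsFrattiniFactor (X Y : Subgroup G) : Prop :=
  (∀ a b : G, a ∈ X → b ∈ X → a * b * a⁻¹ * b⁻¹ ∈ Y) ∧ ¬ IsComplementedFactor G X Y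

/-- The chief factor `X/Y` is central in `G`, i.e. `X/Y ≤ Z(G/Y)`. -/
def IsCentralFactor (X Y : Subgroup G) : Prop :=
  ∀ g x : G, x ∈ X → g * x * g⁻¹ * x⁻¹ ∈ Y

/-- The `G`-group `V` (a group with an action `a : G →* MulAut V` of `G` by automorphisms)
is `G`-isomorphic to the chief factor `X/Y` (on which `G` acts by conjugation): there is a
surjective homomorphism `X →* V` with kernel `Y` transforming conjugation by `g ∈ G` into
the action of `g` on `V`. -/
def RepresentsFactor {V : Type*} [Group V] (a : G →* MulAut V) (X Y : Subgroup G) : Prop :=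
  ∃ f : X →* V, Function.Surjective f ∧ (∀ x : X, f x = 1 ↔ (x : G) ∈ Y) ∧
    ∀ (g : G) (x y : X), (y : G) = g * (x : G) * g⁻¹ → f y = a g (f x)

/-- Two `G`-groups `(V₁, a₁)`, `(V₂, a₂)` are `G`-equivalent: there are isomorphisms
`φ : V₁ ≃* V₂` and `Φ : V₁ ⋊ G ≃* V₂ ⋊ G` making the natural diagram of the two
extensions `1 → Vᵢ → Vᵢ ⋊ G → G → 1` commute. -/
def GEquiv {V₁ V₂ : Type*} [Group V₁] [Group V₂]
    (a₁ : G →* MulAut V₁) (a₂ : G →* MulAut V₂) : Prop :=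
  ∃ (φ : V₁ ≃* V₂) (Φ : (V₁ ⋊[a₁] G) ≃* (V₂ ⋊[a₂] G)),
    (∀ v : V₁, Φ (SemidirectProduct.inl v) = SemidirectProduct.inl (φ v)) ∧
    ∀ x, (Φ x).right = x.right

/-- `G`-isomorphism of `G`-groups. -/
def GIso {V₁ V₂ : Type*} [Group V₁] [Group V₂]
    (a₁ : G →* MulAut V₁) (a₂ : G →* MulAut V₂) : Prop :=
  ∃ φ : V₁ ≃* V₂, ∀ (g : G) (v : V₁), φ (a₁ g v) = a₂ g (φ v)

/-- `N` is a minimal normal subgroup of `G`. -/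
def IsMinimalNormal (N : Subgroup G) : Prop :=
  N.Normal ∧ N ≠ ⊥ ∧ ∀ M : Subgroup G, M.Normal → M ≠ ⊥ → M ≤ N → M = N

/-- The socle of `G`: the subgroup generated by all minimal normal subgroups of `G`. -/
def socle : Subgroup G := sSup {N : Subgroup G | IsMinimalNormal G N}

instance socle_normal : (socle G).Normal := by
  constructor
  intro n hn g
  have h : socle G ≤ (socle G).comap (MulAut.conj g).toMonoidHom := by
    rw [socle]
    apply sSup_le
    intro N hN x hx
    have h1 : (MulAut.conj g).toMonoidHom x ∈ N := by
      simpa [MulAut.conj_apply] using hN.1.conj_mem x hx g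
    exact Subgroup.mem_comap.2 (le_sSup hN h1)
  have h2 := h hn
  simpa [MulAut.conj_apply] using h2

/-- The action of `G` (by conjugation, through `f : G →* Q`) on the socle of `Q`. -/
def socAct {Q : Type*} [Group Q] (f : G →* Q) : G →* MulAut (socle Q) :=
  MulAut.conjNormal.comp f

/-- The diagonal action of `G` on `V × V` induced by an action on `V`. -/
def prodAct {V : Type*} [Group V] (a : G →* MulAut V) : G →* MulAut (V × V) where
  toFun g := MulEquiv.prodCongr (a g) (a g)
  map_one' := by
    ext x <;> simp [MulEquiv.prodCongr, MulAut.one_apply]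
  map_mul' g h := by
    ext x <;> simp [MulEquiv.prodCongr, MulAut.mul_apply]

/-- The diagonal action of `H` on `V^u` induced by an action on `V`. -/
def diagAct (H : Type*) [Group H] {V : Type*} [Group V] (b : H →* MulAut V) (u : ℕ) :
    H →* MulAut (Fin u → V) where
  toFun g := MulEquiv.piCongrRight fun _ => b g
  map_one' := by
    ext x i; simp
  map_mul' g h := by
    ext x i; simp [MulAut.mul_apply]

variable {G}

/-- The elements `gs 0, …, gs (k-1)` of `G` satisfy the `V`-property in `G`: they all lie
in the union of the `G`-conjugates of some maximal subgroup `M` of `G` such that the socle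
of `G/core_G(M)` is `G`-equivalent to `V` or to `V × V`. -/
def SatisfyVProperty {V : Type*} [Group V] (a : G →* MulAut V) {k : ℕ}
    (gs : Fin k → G) : Prop :=
  ∃ M : Subgroup G, IsCoatom M ∧
    (GEquiv G (socAct G (QuotientGroup.mk' M.normalCore)) a ∨
      GEquiv G (socAct G (QuotientGroup.mk' M.normalCore)) (prodAct G a)) ∧
    ∀ i, ∃ x : G, x * gs i * x⁻¹ ∈ M

/-- `P*_{G,V}(k)`: the probability that `k` independent uniformly random elements of `G`
satisfy the `V`-property in `G`. -/
noncomputable def pStar {V : Type*} [Group V] (a : G →* MulAut V) (k : ℕ) : ℝ :=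
  Nat.card {gs : Fin k → G // SatisfyVProperty a gs} / (Nat.card G : ℝ) ^ k

/-- The collection of normal subgroups `N` of `G` such that `G/N` is isomorphic to the
monolithic primitive group `L_V` associated to `V` (that is, `V ⋊ (G/C_G(V))` if `V` is
abelian and `G/C_G(V)` otherwise; here `C_G(V)` is the kernel of the action of `G` on
`V`) and the socle of `G/N` is `G`-equivalent to `V`. -/
def crownNormals {V : Type*} [Group V] (a : G →* MulAut V) : Set (Subgroup G) :=
  {N | ∃ _ : N.Normal,
    ((∀ x y : V, x * y = y * x) →
      Nonempty ((G ⧸ N) ≃* (V ⋊[QuotientGroup.kerLift a] (G ⧸ a.ker)))) ∧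
    (¬ (∀ x y : V, x * y = y * x) → Nonempty ((G ⧸ N) ≃* (G ⧸ a.ker))) ∧
    GEquiv G (socAct G (QuotientGroup.mk' N)) a}

/-- `R_G(V)`: the intersection of all normal subgroups `N` of `G` with `G/N ≅ L_V` and
`soc(G/N)` `G`-equivalent to `V`. -/
def crownRadical {V : Type*} [Group V] (a : G →* MulAut V) : Subgroup G :=
  sInf (crownNormals a)

instance crownRadical_normal {V : Type*} [Group V] (a : G →* MulAut V) :
    (crownRadical a).Normal := by
  constructor
  intro n hn g
  rw [crownRadical, Subgroup.mem_sInf] at hn ⊢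
  intro p hp
  obtain ⟨hpN, hrest⟩ := hp
  exact hpN.conj_mem n (hn p ⟨hpN, hrest⟩) g

/-- `I_G(V)`: the preimage in `G` of the socle of `G/R_G(V)`; the `V`-crown of `G` is
`I_G(V)/R_G(V)`. -/
def crownSocle {V : Type*} [Group V] (a : G →* MulAut V) : Subgroup G :=
  (socle (G ⧸ crownRadical a)).comap (QuotientGroup.mk' (crownRadical a))

/-- A chief series of `G`: a chain `⊥ = N_0 < N_1 < … < N_len = ⊤` of normal subgroups
of `G` in which each factor `N_{i+1}/N_i` is a chief factor of `G`. -/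
structure ChiefSeries (G : Type*) [Group G] where
  len : ℕ
  ser : Fin (len + 1) → Subgroup G
  bot_eq : ser 0 = ⊥
  top_eq : ser (Fin.last len) = ⊤
  chief : ∀ i : Fin len, IsChiefFactorPair G (ser i.succ) (ser i.castSucc)

/-- `δ_V(G)` (for a `G`-module `V`): the number of complemented factors in the chief
series `S` of `G` which are `G`-isomorphic to `V`. -/
noncomputable def deltaIso {V : Type*} [Group V] (a : G →* MulAut V)
    (S : ChiefSeries G) : ℕ :=
  Nat.card {i : Fin S.len //
    IsComplementedFactor G (S.ser i.succ) (S.ser i.castSucc) ∧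
    RepresentsFactor G a (S.ser i.succ) (S.ser i.castSucc)}

/-- The chief factor `X/Y` of `G` is `G`-equivalent to the `G`-group `(V, a)`. -/
def FactorGEquiv (X Y : Subgroup G) {V : Type*} [Group V] (a : G →* MulAut V) : Prop :=
  ∃ (W : Type) (_ : Group W) (b : G →* MulAut W),
    RepresentsFactor G b X Y ∧ GEquiv G b a

/-- `δ_V(G)` (for a `G`-group `V`): the number of non-Frattini factors in the chief
series `S` of `G` which are `G`-equivalent to `V`. -/
noncomputable def deltaEquiv {V : Type*} [Group V] (a : G →* MulAut V)
    (S : ChiefSeries G) : ℕ :=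
  Nat.card {i : Fin S.len //
    ¬ IsFrattiniFactor G (S.ser i.succ) (S.ser i.castSucc) ∧
    FactorGEquiv (S.ser i.succ) (S.ser i.castSucc) a}

/-- Bundled `G`-group: a group together with an action of `G` by automorphisms. -/
structure GGroup (G : Type) [Group G] : Type 1 where
  carrier : Type
  [grp : Group carrier]
  act : G →* MulAut carrier

attribute [instance] GGroup.grp

/-- The action `b` of `H` on `V` is irreducible: `V` is nontrivial and has no proper
nontrivial (normal) `H`-invariant subgroup. -/
def IsIrreducibleGGroup (H : Type*) [Group H] {V : Type*} [Group V]
    (b : H →* MulAut V) : Prop :=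
  Nontrivial V ∧
    ∀ W : Subgroup V, W.Normal → (∀ (h : H) (v : V), v ∈ W → b h v ∈ W) → W = ⊥ ∨ W = ⊤

/-- The `H`-equivariant endomorphisms of `V` (for `H`-modules `V` this is
`End_H(V)`). -/
def EquivEnd (H : Type*) [Group H] {V : Type*} [Group V] (b : H →* MulAut V) :=
  {f : V →* V // ∀ (h : H) (v : V), f (b h v) = b h (f v)}

/-- `q_V := |End_H(V)|`. -/
noncomputable def endCard (H : Type*) [Group H] {V : Type*} [Group V]
    (b : H →* MulAut V) : ℕ :=
  Nat.card (EquivEnd H b)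

/-- `n_V := dim_{End_H(V)} V`, characterised by `|End_H(V)| ^ n_V = |V|` (for a finite
irreducible `H`-module `V`, `End_H(V)` is a field and `V` a vector space over it). -/
noncomputable def dimEnd (H : Type*) [Group H] {V : Type*} [Group V]
    (b : H →* MulAut V) : ℕ :=
  sInf {n : ℕ | endCard H b ^ n = Nat.card V}

/-- The set of derivations `ζ : H → V` (satisfying `ζ(h₁h₂) = ζ(h₁)^{h₂} · ζ(h₂)`). -/
def DerSet (H : Type*) [Group H] {V : Type*} [Group V] (b : H →* MulAut V) :
    Set (H → V) :=
  {ζ | ∀ h₁ h₂ : H, ζ (h₁ * h₂) = b h₂ (ζ h₁) * ζ h₂}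

/-- The set of inner derivations `h ↦ [h,v] = v^h · v⁻¹`. -/
def IderSet (H : Type*) [Group H] {V : Type*} [Group V] (b : H →* MulAut V) :
    Set (H → V) :=
  {ζ | ∃ v : V, ∀ h : H, ζ h = b h v * v⁻¹}

/-- `m := dim_{End_H(V)} H¹(H,V)` where `H¹(H,V) = Der(H,V)/Ider(H,V)`, characterised by
`|End_H(V)| ^ m · |Ider(H,V)| = |Der(H,V)|`. -/
noncomputable def h1Dim (H : Type*) [Group H] {V : Type*} [Group V]
    (b : H →* MulAut V) : ℕ :=
  sInf {m : ℕ | endCard H b ^ m * Nat.card (IderSet H b) = Nat.card (DerSet H b)}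

/-- The probability that a uniformly random element of `H` fixes a nonzero (i.e.
non-identity) vector of `V`. -/
noncomputable def fixProb (H : Type*) [Group H] {V : Type*} [Group V]
    (b : H →* MulAut V) : ℝ :=
  Nat.card {h : H // ∃ v : V, v ≠ 1 ∧ b h v = v} / (Nat.card H : ℝ)

/-- `A` is a set of representatives for the irreducible `G`-modules which are
`G`-isomorphic to a chief factor of `G` satisfying `P`:  every member of `A` is an
irreducible abelian `G`-group `G`-isomorphic to some chief factor satisfying `P`, and
every chief factor of `G` satisfying `P` is `G`-isomorphic to exactly one member
of `A`. -/
def IsModuleRepSet {G : Type} [Group G] (P : Subgroup G → Subgroup G → Prop)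
    (A : Finset (GGroup G)) : Prop :=
  (∀ V ∈ A, (∀ x y : V.carrier, x * y = y * x) ∧ IsIrreducibleGGroup G V.act ∧
      ∃ X Y : Subgroup G, IsChiefFactorPair G X Y ∧ P X Y ∧ RepresentsFactor G V.act X Y) ∧
  ∀ X Y : Subgroup G, IsChiefFactorPair G X Y → P X Y →
    ∃! V : GGroup G, V ∈ A ∧ RepresentsFactor G V.act X Y

/-- `A` is a set of representatives for the irreducible `G`-groups which are
`G`-equivalent to a chief factor of `G` satisfying `P`. -/
def IsGGroupRepSet {G : Type} [Group G] (P : Subgroup G → Subgroup G → Prop)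
    (A : Finset (GGroup G)) : Prop :=
  (∀ V ∈ A, IsIrreducibleGGroup G V.act ∧
      ∃ X Y : Subgroup G, IsChiefFactorPair G X Y ∧ P X Y ∧ FactorGEquiv X Y V.act) ∧
  ∀ X Y : Subgroup G, IsChiefFactorPair G X Y → P X Y →
    ∃! V : GGroup G, V ∈ A ∧ FactorGEquiv X Y V.act

/-!
An abelian group is invariably generated by a tuple exactly when the tuple generates it, and `k`
vectors of `𝔽_p^δ` span it exactly when the `δ` columns of the `k × δ` matrix they form are
linearly independent in `𝔽_p^k`; counting those gives `P_I(G, k) = ∏_{i<δ} (1 - p^i / p^k)`.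
Expanding `1 - ∏_{i<δ} (1 - a_i) = Σ_{d<δ} a_d ∏_{i<d} (1 - a_i)`, the `d`-th summand, summed over
`k`, telescopes against `∏_{i≤d} (1 - p^i / p^k)` and contributes `p^(d+1) / (p^(d+1) - 1)`.

For the bound, these contributions are at most `2, 4/3, 8/7, 8/7, …`, while going from `δ` to
`δ + 2` multiplies `5/3 · p^(δ/2)` by `p`, which outgrows two new contributions once `δ ≥ 2`; the
ranks `δ ≤ 3` are checked by hand, and only `p = δ = 2` is tight.
-/

open Finset Filter Topology

theorem InvGen.map {G H : Type*} [Group G] [Group H] {φ : G →* H} (hφ : Function.Surjective φ)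
    {k : ℕ} {f : Fin k → G} (hf : InvGen G f) : InvGen H (φ ∘ f) := by
  intro c
  choose c' hc' using fun i ↦ hφ (c i)
  have h := congrArg (Subgroup.map φ) (hf c')
  rw [MonoidHom.map_closure, ← Set.range_comp, Subgroup.map_top_of_surjective _ hφ] at h
  simpa [Function.comp_def, hc'] using h

theorem invGen_comp_mulEquiv_iff {G H : Type*} [Group G] [Group H] (e : G ≃* H) {k : ℕ}
    (f : Fin k → G) : InvGen H (e ∘ f) ↔ InvGen G f :=
  ⟨fun h ↦ by simpa [Function.comp_def] using h.map (φ := e.symm.toMonoidHom) e.symm.surjective,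
    fun h ↦ h.map (φ := e.toMonoidHom) e.surjective⟩

theorem probInvGen_congr {G H : Type*} [Group G] [Group H] (e : G ≃* H) (k : ℕ) :
    probInvGen G k = probInvGen H k := by
  rw [probInvGen, probInvGen, Nat.card_congr e.toEquiv, Nat.card_congr
    ((Equiv.piCongrRight fun _ ↦ e.toEquiv).subtypeEquiv
      fun f ↦ (invGen_comp_mulEquiv_iff e f).symm)]

theorem invGen_iff_closure_eq_top {G : Type*} [CommGroup G] {k : ℕ} (f : Fin k → G) :
    InvGen G f ↔ Subgroup.closure (Set.range f) = ⊤ := by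
  simp only [InvGen, mul_inv_cancel_comm, forall_const]

theorem span_zmod_eq_addSubgroupClosure {n : ℕ} {M : Type*} [AddCommGroup M]
    [Module (ZMod n) M] (s : Set M) :
    (Submodule.span (ZMod n) s).toAddSubgroup = AddSubgroup.closure s :=
  le_antisymm (fun _ hx ↦ (Submodule.span_le (p := AddSubgroup.toZModSubmodule n
    (AddSubgroup.closure s))).mpr AddSubgroup.subset_closure hx)
    ((AddSubgroup.closure_le _).mpr Submodule.subset_span)

theorem invGen_iff_span_eq_top {n : ℕ} {M : Type*} [AddCommGroup M] [Module (ZMod n) M] {k : ℕ}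
    (f : Fin k → Multiplicative M) :
    InvGen _ f ↔ Submodule.span (ZMod n) (Set.range fun i ↦ (f i).toAdd) = ⊤ := by
  rw [invGen_iff_closure_eq_top, ← Submodule.toAddSubgroup_eq_top, span_zmod_eq_addSubgroupClosure,
    ← Subgroup.toAddSubgroup'.apply_eq_iff_eq, Subgroup.toAddSubgroup'_closure, OrderIso.map_top]
  rfl

theorem span_range_eq_top_iff_linearIndependent_swap {K ι κ : Type*} [Field K] [Fintype ι]
    [Fintype κ] (f : ι → κ → K) :
    Submodule.span K (Set.range f) = ⊤ ↔ LinearIndependent K (Function.swap f) := by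
  have h := (Matrix.rank_eq_finrank_span_row (Matrix.of f)).symm.trans
    (Matrix.rank_eq_finrank_span_cols (Matrix.of f))
  rw [linearIndependent_iff_card_eq_finrank_span, Submodule.eq_top_iff_finrank_eq,
    Module.finrank_fintype_fun_eq_card, Set.finrank, eq_comm]
  exact h ▸ Iff.rfl

theorem card_span_eq_top (K : Type*) [Field K] [Fintype K] (k δ : ℕ) :
    (Nat.card {f : Fin k → Fin δ → K // Submodule.span K (Set.range f) = ⊤} : ℝ) =
      ∏ i ∈ range δ, ((Fintype.card K : ℝ) ^ k - (Fintype.card K : ℝ) ^ i) := by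
  let swap : (Fin k → Fin δ → K) ≃ (Fin δ → Fin k → K) := Equiv.piComm _
  rw [Nat.card_congr (swap.subtypeEquiv (q := fun g ↦ LinearIndependent K g)
    span_range_eq_top_iff_linearIndependent_swap)]
  rcases le_or_gt δ k with hδk | hkδ
  · rw [card_linearIndependent (by simpa using hδk), Module.finrank_fin_fun,
      ← Fin.prod_univ_eq_prod_range, Nat.cast_prod]
    refine prod_congr rfl fun i _ ↦ ?_
    rw [Nat.cast_sub (Nat.pow_le_pow_right Fintype.card_pos (by omega))]
    push_cast; rfl
  · have : IsEmpty {g : Fin δ → Fin k → K // LinearIndependent K g} :=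
      ⟨fun ⟨g, hg⟩ ↦ by
        have := hg.fintype_card_le_finrank
        simp only [Fintype.card_fin, Module.finrank_fin_fun] at this
        omega⟩
    rw [Nat.card_of_isEmpty, Nat.cast_zero, prod_eq_zero (mem_range.mpr hkδ) (sub_self _)]

theorem probInvGen_eq_prod {p δ : ℕ} [Fact p.Prime] {G : Type*} [Group G]
    (e : G ≃* Multiplicative (Fin δ → ZMod p)) (k : ℕ) :
    probInvGen G k = ∏ i ∈ range δ, (1 - (p : ℝ) ^ i / (p : ℝ) ^ k) := by
  have hp : (p : ℝ) ^ k ≠ 0 := pow_ne_zero _ (Nat.cast_ne_zero.mpr (Fact.out : p.Prime).ne_zero)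
  rw [probInvGen_congr e, probInvGen, Nat.card_congr ((Equiv.piCongrRight fun _ ↦
    Multiplicative.toAdd).subtypeEquiv (q := fun g ↦ Submodule.span (ZMod p) (Set.range g) = ⊤)
    invGen_iff_span_eq_top), card_span_eq_top, ZMod.card]
  have hcard : (Nat.card (Multiplicative (Fin δ → ZMod p)) : ℝ) ^ k =
      ∏ _i ∈ range δ, (p : ℝ) ^ k := by
    simp [← pow_mul, mul_comm]
  rw [hcard, ← prod_div_distrib]
  exact prod_congr rfl fun i _ ↦ by rw [sub_div, div_self hp]

theorem hasSum_of_sub_eq_mul {c t : ℕ → ℝ} {r l : ℝ} (hr : 0 < r) (hc : ∀ k, 0 ≤ c k)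
    (ht : Tendsto t atTop (𝓝 l)) (hstep : ∀ k, t (k + 1) - t k = r * c k) :
    HasSum c ((l - t 0) / r) := by
  rw [hasSum_iff_tendsto_nat_of_nonneg hc]
  have hpartial (n : ℕ) : ∑ k ∈ range n, c k = (t n - t 0) / r := by
    rw [← sum_range_sub, sum_div]
    exact sum_congr rfl fun k _ ↦ by rw [hstep, mul_div_cancel_left₀ _ hr.ne']
  simpa only [hpartial] using (ht.sub_const _).div_const _

theorem one_sub_prod_one_sub {R : Type*} [CommRing R] (a : ℕ → R) (n : ℕ) :
    1 - ∏ i ∈ range n, (1 - a i) = ∑ d ∈ range n, a d * ∏ i ∈ range d, (1 - a i) := by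
  induction n with
  | zero => simp
  | succ n ih => rw [prod_range_succ, sum_range_succ, ← ih]; ring

/-- The value of `C(C_P^δ)`, in the form produced by the telescoping argument. -/
noncomputable def elemAbelianCheb (P : ℝ) (δ : ℕ) : ℝ :=
  ∑ d ∈ range δ, P ^ (d + 1) / (P ^ (d + 1) - 1)

theorem strictAntiOn_div_sub_one : StrictAntiOn (fun x : ℝ ↦ x / (x - 1)) (Set.Ioi 1) := by
  intro a ha b hb hab
  simp only [Set.mem_Ioi] at ha hb
  rw [div_lt_div_iff₀ (by linarith) (by linarith)]
  linarith

section
variable {P : ℝ}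

theorem prod_one_sub_pow_div_pow_nonneg (hP : 1 < P) (d k : ℕ) :
    0 ≤ ∏ i ∈ range d, (1 - P ^ i / P ^ k) := by
  have hPk : 0 < P ^ k := by positivity
  rcases lt_or_ge k d with hkd | hdk
  · rw [prod_eq_zero (mem_range.mpr hkd) (by rw [div_self hPk.ne', sub_self])]
  · refine prod_nonneg fun i hi ↦ sub_nonneg.mpr ((div_le_one hPk).mpr ?_)
    exact pow_le_pow_right₀ hP.le (by simp at hi; omega)

theorem tendsto_prod_one_sub_pow_div_pow (hP : 1 < P) (d : ℕ) :
    Tendsto (fun k : ℕ ↦ ∏ i ∈ range d, (1 - P ^ i / P ^ k)) atTop (𝓝 1) := by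
  rw [← prod_const_one (s := range d)]
  refine tendsto_finsetProd _ fun i _ ↦ ?_
  have h : Tendsto (fun k : ℕ ↦ P ^ i * P⁻¹ ^ k) atTop (𝓝 (P ^ i * 0)) :=
    (tendsto_pow_atTop_nhds_zero_of_lt_one (by positivity) (inv_lt_one_of_one_lt₀ hP)).const_mul _
  simpa [div_eq_mul_inv] using h.const_sub 1

theorem hasSum_pow_div_pow_mul_prod (hP : 1 < P) (d : ℕ) :
    HasSum (fun k : ℕ ↦ P ^ d / P ^ k * ∏ i ∈ range d, (1 - P ^ i / P ^ k))
      (P ^ (d + 1) / (P ^ (d + 1) - 1)) := by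
  have hP0 : 0 < P := by linarith
  have hPd : 1 < P ^ (d + 1) := one_lt_pow₀ hP d.succ_ne_zero
  set t : ℕ → ℝ := fun k ↦ ∏ i ∈ range (d + 1), (1 - P ^ i / P ^ k)
  have ht0 : t 0 = 0 := prod_eq_zero (mem_range.mpr d.succ_pos) (by simp)
  have hstep (k : ℕ) : t (k + 1) - t k =
      (1 - 1 / P ^ (d + 1)) * (P ^ d / P ^ k * ∏ i ∈ range d, (1 - P ^ i / P ^ k)) := by
    have hshift (i : ℕ) : P ^ (i + 1) / P ^ (k + 1) = P ^ i / P ^ k := by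
      rw [pow_succ, pow_succ, mul_div_mul_right _ _ hP0.ne']
    have hsucc : t (k + 1) = (∏ i ∈ range d, (1 - P ^ i / P ^ k)) * (1 - 1 / P ^ (k + 1)) := by
      simp only [t, prod_range_succ' _ d, hshift, pow_zero]
    rw [hsucc, show t k = _ from prod_range_succ _ d]
    field_simp
    ring
  have hr : 0 < 1 - 1 / P ^ (d + 1) := by
    rw [sub_pos, div_lt_one (by positivity)]; exact hPd
  have h := hasSum_of_sub_eq_mul (t := t) hr (fun k ↦ mul_nonneg (by positivity)
    (prod_one_sub_pow_div_pow_nonneg hP d k)) (tendsto_prod_one_sub_pow_div_pow hP (d + 1)) hstep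
  rw [ht0, sub_zero] at h
  convert h using 1
  field_simp

theorem hasSum_one_sub_prod_one_sub_pow_div_pow (hP : 1 < P) (δ : ℕ) :
    HasSum (fun k : ℕ ↦ 1 - ∏ i ∈ range δ, (1 - P ^ i / P ^ k)) (elemAbelianCheb P δ) := by
  simp only [one_sub_prod_one_sub]
  exact hasSum_sum fun d _ ↦ hasSum_pow_div_pow_mul_prod hP d

theorem sum_pow_div_pow_sub_pow (hP : 1 < P) (δ : ℕ) :
    ∑ i ∈ range δ, P ^ δ / (P ^ δ - P ^ i) = elemAbelianCheb P δ := by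
  rw [elemAbelianCheb, ← sum_range_reflect]
  refine sum_congr rfl fun j hj ↦ ?_
  have hδ : P ^ δ = P ^ (δ - 1 - j) * P ^ (j + 1) := by
    rw [← pow_add]; congr 1; simp at hj; omega
  rw [hδ, ← mul_sub_one, mul_div_mul_left _ _ (by positivity)]

theorem pow_div_pow_sub_one_le (hP : 2 ≤ P) {n : ℕ} {a : ℝ} (ha : 1 < a) (han : a ≤ 2 ^ n) :
    P ^ n / (P ^ n - 1) ≤ a / (a - 1) :=
  have h : a ≤ P ^ n := han.trans (pow_le_pow_left₀ zero_le_two hP n)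
  strictAntiOn_div_sub_one.antitoneOn ha (ha.trans_le h) h

theorem elemAbelianCheb_add_two_lt (hP : 2 ≤ P) {δ : ℕ} (hδ : 2 ≤ δ)
    (h : elemAbelianCheb P δ ≤ 5 / 3 * √(P ^ δ)) :
    elemAbelianCheb P (δ + 2) < 5 / 3 * √(P ^ (δ + 2)) := by
  have hterm (n : ℕ) (hn : 3 ≤ n) : P ^ n / (P ^ n - 1) ≤ 8 / 7 := by
    convert pow_div_pow_sub_one_le hP (a := 8) (by norm_num)
      (by calc (8 : ℝ) = 2 ^ 3 := by norm_num
            _ ≤ 2 ^ n := pow_le_pow_right₀ one_le_two hn) using 1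
    norm_num
  have hsqrt : √(P ^ (δ + 2)) = P * √(P ^ δ) := by
    rw [pow_add, Real.sqrt_mul (by positivity), Real.sqrt_sq (by linarith), mul_comm]
  have hs : 2 ≤ √(P ^ δ) := Real.le_sqrt_of_sq_le (by
    calc (2 : ℝ) ^ 2 ≤ P ^ 2 := pow_le_pow_left₀ zero_le_two hP 2
      _ ≤ P ^ δ := pow_le_pow_right₀ (by linarith) hδ)
  have h1 := hterm (δ + 1) (by omega)
  have h2 := hterm (δ + 2) (by omega)
  rw [elemAbelianCheb, sum_range_succ, sum_range_succ, ← elemAbelianCheb, hsqrt]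
  nlinarith [mul_le_mul hP hs zero_le_two (by linarith)]

theorem elemAbelianCheb_one_lt (hP : 2 ≤ P) : elemAbelianCheb P 1 < 5 / 3 * √(P ^ 1) := by
  have h1 := pow_div_pow_sub_one_le hP (n := 1) (a := 2) one_lt_two (by norm_num)
  have hs : 6 / 5 < √(P ^ 1) := Real.lt_sqrt_of_sq_lt (by linarith)
  norm_num [elemAbelianCheb] at h1 hs ⊢
  linarith

theorem elemAbelianCheb_two_le (hP : 2 ≤ P) :
    elemAbelianCheb P 2 ≤ 5 / 3 * √(P ^ 2) ∧ (2 < P → elemAbelianCheb P 2 < 5 / 3 * √(P ^ 2)) := by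
  have h1 := pow_div_pow_sub_one_le hP (n := 1) (a := 2) one_lt_two (by norm_num)
  have h2 := pow_div_pow_sub_one_le hP (n := 2) (a := 4) (by norm_num) (by norm_num)
  have h1' (hP' : 2 < P) : P ^ 1 / (P ^ 1 - 1) < 2 := by
    rw [pow_one, div_lt_iff₀ (by linarith)]; linarith
  rw [Real.sqrt_sq (by linarith)]
  simp only [elemAbelianCheb, sum_range_succ, sum_range_zero, zero_add] at h1 h2 ⊢
  exact ⟨by linarith, fun hP' ↦ by linarith [h1' hP']⟩

theorem elemAbelianCheb_three_lt (hP : 2 ≤ P) : elemAbelianCheb P 3 < 5 / 3 * √(P ^ 3) := by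
  have h1 := pow_div_pow_sub_one_le hP (n := 1) (a := 2) one_lt_two (by norm_num)
  have h2 := pow_div_pow_sub_one_le hP (n := 2) (a := 4) (by norm_num) (by norm_num)
  have h3 := pow_div_pow_sub_one_le hP (n := 3) (a := 8) (by norm_num) (by norm_num)
  have hs : 94 / 35 < √(P ^ 3) := Real.lt_sqrt_of_sq_lt (by
    nlinarith [pow_le_pow_left₀ zero_le_two hP 3])
  norm_num [elemAbelianCheb, sum_range_succ] at h1 h2 h3 ⊢
  linarith

theorem elemAbelianCheb_le (hP : 2 ≤ P) : ∀ δ, elemAbelianCheb P δ ≤ 5 / 3 * √(P ^ δ)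
  | 0 => by norm_num [elemAbelianCheb]
  | 1 => (elemAbelianCheb_one_lt hP).le
  | 2 => (elemAbelianCheb_two_le hP).1
  | 3 => (elemAbelianCheb_three_lt hP).le
  | δ + 4 => (elemAbelianCheb_add_two_lt hP (by omega) (elemAbelianCheb_le hP (δ + 2))).le

theorem elemAbelianCheb_lt (hP : 2 ≤ P) {δ : ℕ} (h : P ≠ 2 ∨ δ ≠ 2) :
    elemAbelianCheb P δ < 5 / 3 * √(P ^ δ) :=
  match δ with
  | 0 => by norm_num [elemAbelianCheb]
  | 1 => elemAbelianCheb_one_lt hP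
  | 2 => (elemAbelianCheb_two_le hP).2 (lt_of_le_of_ne hP (Ne.symm (by simpa using h)))
  | 3 => elemAbelianCheb_three_lt hP
  | δ + 4 => elemAbelianCheb_add_two_lt hP (by omega) (elemAbelianCheb_le hP (δ + 2))

theorem elemAbelianCheb_eq_iff (hP : 2 ≤ P) (δ : ℕ) :
    elemAbelianCheb P δ = 5 / 3 * √(P ^ δ) ↔ P = 2 ∧ δ = 2 := by
  refine ⟨fun h ↦ ?_, ?_⟩
  · by_contra hne
    exact (elemAbelianCheb_lt hP (not_and_or.mp hne)).ne h
  · rintro ⟨rfl, rfl⟩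
    rw [show (2 : ℝ) ^ 2 = 2 ^ 2 from rfl, Real.sqrt_sq zero_le_two]
    norm_num [elemAbelianCheb, sum_range_succ]
end

theorem natCard_eq_pow_of_mulEquiv {p δ : ℕ} [NeZero p] {G : Type*} [Group G]
    (e : G ≃* Multiplicative (Fin δ → ZMod p)) : Nat.card G = p ^ δ := by
  simp [Nat.card_congr e.toEquiv]

theorem nonempty_mulEquiv_klein_iff {p δ : ℕ} (hp : p.Prime) {G : Type*} [Group G]
    (e : G ≃* Multiplicative (Fin δ → ZMod p)) :
    Nonempty (G ≃* Multiplicative (ZMod 2 × ZMod 2)) ↔ p = 2 ∧ δ = 2 := by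
  have : NeZero p := ⟨hp.ne_zero⟩
  refine ⟨fun ⟨e₂⟩ ↦ ?_, ?_⟩
  · have h : p ^ δ = 2 ^ 2 := by
      rw [← natCard_eq_pow_of_mulEquiv e, Nat.card_congr e₂.toEquiv]; simp
    have hδ : δ ≠ 0 := by rintro rfl; simp at h
    exact hp.pow_inj' Nat.prime_two hδ two_ne_zero h
  · rintro ⟨rfl, rfl⟩
    exact ⟨e.trans (LinearEquiv.finTwoArrow (ZMod 2) (ZMod 2)).toAddEquiv.toMultiplicative⟩

theorem cheb_eq_elemAbelianCheb {p δ : ℕ} [Fact p.Prime] {G : Type*} [Group G]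
    (e : G ≃* Multiplicative (Fin δ → ZMod p)) : cheb G = elemAbelianCheb p δ := by
  simp only [cheb, probInvGen_eq_prod e]
  exact (hasSum_one_sub_prod_one_sub_pow_div_pow
    (by exact_mod_cast (Fact.out : p.Prime).one_lt) δ).tsum_eq

theorem chebotarev_elementary_abelian_general (p : ℕ) (hp : p.Prime) (δ : ℕ)
    (G : Type) [Group G]
    (hG : Nonempty (G ≃* Multiplicative (Fin δ → ZMod p))) :
    cheb G = (∑ i ∈ Finset.range δ,
        (p : ℝ) ^ δ / ((p : ℝ) ^ δ - (p : ℝ) ^ i)) ∧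
    cheb G ≤ 5 / 3 * Real.sqrt (Nat.card G) ∧
    (cheb G = 5 / 3 * Real.sqrt (Nat.card G) ↔
      Nonempty (G ≃* Multiplicative (ZMod 2 × ZMod 2))) := by
  obtain ⟨e⟩ := hG
  have : Fact p.Prime := ⟨hp⟩
  have hP : (2 : ℝ) ≤ p := by exact_mod_cast hp.two_le
  have hcard : (Nat.card G : ℝ) = (p : ℝ) ^ δ := by exact_mod_cast natCard_eq_pow_of_mulEquiv e
  rw [cheb_eq_elemAbelianCheb e, hcard, nonempty_mulEquiv_klein_iff hp e,
    elemAbelianCheb_eq_iff hP, sum_pow_div_pow_sub_pow (by linarith)]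
  exact ⟨rfl, elemAbelianCheb_le hP δ, by norm_cast⟩

/-- **Lemma 5.3**: if `G ≅ C_p^δ` is elementary abelian of rank `δ`, then
`C(G) = Σ_{0≤i≤δ-1} p^δ/(p^δ - p^i)`, `C(G) ≤ (5/3)·√|G|`, and equality holds if and
only if `G ≅ C₂ × C₂`. -/
theorem chebotarev_elementary_abelian (p : ℕ) (hp : p.Prime) (δ : ℕ)
    (G : Type) [Group G] [Finite G]
    (hG : Nonempty (G ≃* Multiplicative (Fin δ → ZMod p))) :
    cheb G = (∑ i ∈ Finset.range δ,
        (p : ℝ) ^ δ / ((p : ℝ) ^ δ - (p : ℝ) ^ i)) ∧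
    cheb G ≤ 5 / 3 * Real.sqrt (Nat.card G) ∧
    (cheb G = 5 / 3 * Real.sqrt (Nat.card G) ↔
      Nonempty (G ≃* Multiplicative (ZMod 2 × ZMod 2))) :=
  chebotarev_elementary_abelian_general p hp δ G hG

end ChebotarevPaper
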